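/- arXiv:1504.06729 — 2 statements merged into one kernel-verified Lean document; each statement's English description precedes it below -/
import Mathlib

section
/- Let A ∈ R^{m×n} (m ≤ n), let N ∈ R^{m×n} with ‖N‖_2 ≤ δ, and B = A + N. Then for any k < m, the Frobenius norm of B minus its best rank-k approximation satisfies ‖B − B_k‖_F ≤ ‖A − A_k‖_F + √((m−k)δ^2) + √(2 σ_1(A) (m−k) δ). In particular, if δ ≤ ε^2 ‖A−A_k‖_F^2 / (2 σ_1(A) (m−k)) and √((m−k)) δ ≤ ε‖A−A_k‖_F, then ‖B − B_k‖_F ≤ (1+2ε)‖A − A_k‖_F. -/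
open Matrix

/-- Spectral (operator) norm of a real matrix. -/
noncomputable def specNorm {m n : ℕ} (A : Matrix (Fin m) (Fin n) ℝ) : ℝ :=
  ‖LinearMap.toContinuousLinearMap (Matrix.toEuclideanLin A)‖

/-- Best rank-`k` approximation error `‖A - A_k‖_F` in Frobenius norm. -/
noncomputable def bestErr {m n : ℕ} (A : Matrix (Fin m) (Fin n) ℝ) (k : ℕ) : ℝ :=
  sInf {e : ℝ | ∃ B : Matrix (Fin m) (Fin n) ℝ, B.rank ≤ k ∧
    e = Real.sqrt (∑ i, ∑ j, ((A - B) i j) ^ 2)}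

/-!
Take any `C` of rank at most `k`, enlarge its column space to a `k`-dimensional subspace `W`, and
let `P` be the orthogonal projection onto `W`. Then `C + P N` still has rank at most `k`, and
`A + N - (C + P N) = (A - C) + (1 - P) N`. Since `1 - P` projects onto the `(m - k)`-dimensional
space `Wᗮ`, Parseval gives `‖(1 - P) N‖_F² = ∑ ‖Nᵀ u‖²` over an orthonormal basis `u` of `Wᗮ`,
which is at most `(m - k) ‖N‖₂²`. Hence `‖B - B_k‖_F ≤ ‖A - A_k‖_F + √(m - k) δ`, and both claims
follow from this bound.
-/

open Module

theorem Submodule.exists_le_finrank_eq {K V : Type*} [DivisionRing K] [AddCommGroup V]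
    [Module K V] [FiniteDimensional K V] (U : Submodule K V) {k : ℕ}
    (hUk : finrank K U ≤ k) (hkV : k ≤ finrank K V) :
    ∃ W : Submodule K V, U ≤ W ∧ finrank K W = k := by
  induction k, hUk using Nat.le_induction with
  | base => exact ⟨U, le_rfl, rfl⟩
  | succ k _ ih =>
    obtain ⟨W, hUW, hWk⟩ := ih (by omega)
    obtain ⟨x, hx⟩ := W.exists_of_finrank_lt (by omega)
    have hxW : x ∉ W := by simpa using hx 1 one_ne_zero
    refine ⟨W ⊔ K ∙ x, hUW.trans le_sup_left, ?_⟩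
    rw [finrank_sup_span_singleton hxW, hWk]

namespace ContinuousLinearMap

open scoped InnerProductSpace

theorem sum_norm_sq_starProjection_le {𝕜 E F ι : Type*} [RCLike 𝕜]
    [NormedAddCommGroup E] [InnerProductSpace 𝕜 E] [CompleteSpace E]
    [NormedAddCommGroup F] [InnerProductSpace 𝕜 F] [CompleteSpace F] [Fintype ι]
    (b : OrthonormalBasis ι 𝕜 E) (T : E →L[𝕜] F) (K : Submodule 𝕜 F) [FiniteDimensional 𝕜 K] :
    ∑ j, ‖K.starProjection (T (b j))‖ ^ 2 ≤ finrank 𝕜 K * ‖T‖ ^ 2 := by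
  let u := stdOrthonormalBasis 𝕜 K
  have hP (x : F) : ‖K.starProjection x‖ ^ 2 = ∑ l, ‖⟪(u l : F), x⟫_𝕜‖ ^ 2 := by
    rw [K.starProjection_apply, Submodule.norm_coe, ← u.sum_sq_norm_inner_right]
    simp
  calc ∑ j, ‖K.starProjection (T (b j))‖ ^ 2
      = ∑ l, ∑ j, ‖⟪adjoint T (u l), b j⟫_𝕜‖ ^ 2 := by
        simp_rw [hP, adjoint_inner_left]
        exact Finset.sum_comm
    _ = ∑ l, ‖adjoint T (u l)‖ ^ 2 := by simp_rw [b.sum_sq_norm_inner_left]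
    _ ≤ ∑ _l, ‖T‖ ^ 2 := by
        gcongr with l
        have hu : ‖(u l : F)‖ = 1 := by rw [Submodule.norm_coe]; exact u.orthonormal.1 l
        simpa [hu] using (adjoint T).le_opNorm (u l)
    _ = finrank 𝕜 K * ‖T‖ ^ 2 := by simp

end ContinuousLinearMap

namespace Matrix

section Frobenius

attribute [local instance] frobeniusNormedAddCommGroup

variable {𝕜 m n : Type*} [RCLike 𝕜] [Fintype m] [Fintype n]

theorem frobenius_norm_sq (A : Matrix m n 𝕜) : ‖A‖ ^ 2 = ∑ i, ∑ j, ‖A i j‖ ^ 2 := by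
  change ‖WithLp.toLp 2 fun i => WithLp.toLp 2 fun j => A i j‖ ^ 2 = _
  simp [PiLp.norm_sq_eq_of_L2]

theorem frobenius_norm_eq_sqrt_sum_sq (A : Matrix m n ℝ) :
    ‖A‖ = √(∑ i, ∑ j, (A i j) ^ 2) := by
  rw [← Real.sqrt_sq (norm_nonneg A), frobenius_norm_sq]
  simp

variable [DecidableEq n]

theorem frobenius_norm_sq_eq_sum_norm_sq_toEuclideanLin (A : Matrix m n 𝕜) :
    ‖A‖ ^ 2 = ∑ j, ‖toEuclideanLin A (EuclideanSpace.basisFun n 𝕜 j)‖ ^ 2 := by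
  rw [frobenius_norm_sq, Finset.sum_comm]
  simp [EuclideanSpace.norm_sq_eq, toLpLin_apply]

theorem rank_eq_finrank_range_toEuclideanLin (A : Matrix m n 𝕜) :
    A.rank = finrank 𝕜 (LinearMap.range (toEuclideanLin A)) := by
  rw [rank_eq_finrank_range_toLin A (PiLp.basisFun 2 𝕜 m) (PiLp.basisFun 2 𝕜 n)]
  rfl

theorem frobenius_norm_toEuclideanLin_symm_starProjection_comp_le [DecidableEq m]
    (K : Submodule 𝕜 (EuclideanSpace 𝕜 m)) (N : Matrix m n 𝕜) :
    ‖toEuclideanLin.symm (K.starProjection.toLinearMap ∘ₗ toEuclideanLin N)‖ ≤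
      √(finrank 𝕜 K) * ‖(toEuclideanLin N).toContinuousLinearMap‖ := by
  rw [← pow_le_pow_iff_left₀ (norm_nonneg _) (by positivity) two_ne_zero, mul_pow,
    Real.sq_sqrt (Nat.cast_nonneg _), frobenius_norm_sq_eq_sum_norm_sq_toEuclideanLin]
  simpa using (toEuclideanLin N).toContinuousLinearMap.sum_norm_sq_starProjection_le
    (EuclideanSpace.basisFun n 𝕜) K

theorem exists_rank_le_norm_add_sub_le [DecidableEq m] {k : ℕ} (hk : k ≤ Fintype.card m)
    (A N C : Matrix m n 𝕜) (hC : C.rank ≤ k) :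
    ∃ C' : Matrix m n 𝕜, C'.rank ≤ k ∧ ‖A + N - C'‖ ≤
      ‖A - C‖ + √((Fintype.card m : ℝ) - k) * ‖(toEuclideanLin N).toContinuousLinearMap‖ := by
  obtain ⟨W, hCW, hW⟩ := (LinearMap.range (toEuclideanLin C)).exists_le_finrank_eq (k := k)
    (by rwa [← rank_eq_finrank_range_toEuclideanLin]) (by simpa using hk)
  have hWperp : finrank 𝕜 Wᗮ = Fintype.card m - k := by
    have := W.finrank_add_finrank_orthogonal
    simp only [finrank_euclideanSpace, hW] at this
    omega
  set T := toEuclideanLin N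
  refine ⟨C + toEuclideanLin.symm (W.starProjection.toLinearMap ∘ₗ T), ?_, ?_⟩
  · rw [rank_eq_finrank_range_toEuclideanLin, ← hW]
    refine Submodule.finrank_mono ?_
    rintro _ ⟨x, rfl⟩
    simpa using W.add_mem (hCW ⟨x, rfl⟩) (W.starProjection_apply_mem (T x))
  · have hsplit : A + N - (C + toEuclideanLin.symm (W.starProjection.toLinearMap ∘ₗ T)) =
        A - C + toEuclideanLin.symm (Wᗮ.starProjection.toLinearMap ∘ₗ T) := by
      apply toEuclideanLin.injective
      ext1 x
      simp only [map_add, map_sub, LinearEquiv.apply_symm_apply, LinearMap.add_apply,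
        LinearMap.sub_apply, LinearMap.comp_apply, ContinuousLinearMap.coe_coe]
      rw [eq_sub_of_add_eq' (W.starProjection_add_starProjection_orthogonal (T x))]
      abel
    calc ‖A + N - (C + toEuclideanLin.symm (W.starProjection.toLinearMap ∘ₗ T))‖
        ≤ ‖A - C‖ + ‖toEuclideanLin.symm (Wᗮ.starProjection.toLinearMap ∘ₗ T)‖ :=
          hsplit ▸ norm_add_le _ _
      _ ≤ _ := by
          grw [frobenius_norm_toEuclideanLin_symm_starProjection_comp_le, hWperp,
            Nat.cast_sub hk]

end Frobenius

end Matrix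

section BestErr

attribute [local instance] Matrix.frobeniusNormedAddCommGroup

theorem bestErr_le {m n k : ℕ} {A C : Matrix (Fin m) (Fin n) ℝ} (hC : C.rank ≤ k) :
    bestErr A k ≤ ‖A - C‖ :=
  csInf_le ⟨0, by rintro _ ⟨_, _, rfl⟩; positivity⟩ ⟨C, hC, frobenius_norm_eq_sqrt_sum_sq _⟩

theorem bestErr_add_le {m n k : ℕ} (hk : k ≤ m) (A N : Matrix (Fin m) (Fin n) ℝ) :
    bestErr (A + N) k ≤ bestErr A k + √((m : ℝ) - k) * specNorm N := by
  rw [← sub_le_iff_le_add]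
  refine le_csInf ⟨_, 0, by simp, rfl⟩ ?_
  rintro _ ⟨C, hC, rfl⟩
  obtain ⟨C', hC', hle⟩ := exists_rank_le_norm_add_sub_le (by simpa using hk) A N C hC
  rw [sub_le_iff_le_add, ← frobenius_norm_eq_sqrt_sum_sq]
  simpa [specNorm] using (bestErr_le hC').trans hle

end BestErr

theorem stmt_3_general {m n k : ℕ} (hk : k < m)
    (A N : Matrix (Fin m) (Fin n) ℝ) (δ ε : ℝ)
    (hN : specNorm N ≤ δ) :
    bestErr (A + N) k ≤ bestErr A k + Real.sqrt (((m : ℝ) - k) * δ ^ 2)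
        + Real.sqrt (2 * specNorm A * ((m : ℝ) - k) * δ) ∧
    ((δ ≤ ε ^ 2 * (bestErr A k) ^ 2 / (2 * specNorm A * ((m : ℝ) - k)) →
      Real.sqrt ((m : ℝ) - k) * δ ≤ ε * bestErr A k →
      bestErr (A + N) k ≤ (1 + 2 * ε) * bestErr A k)) := by
  have hδ : 0 ≤ δ := (norm_nonneg _).trans hN
  have hpert : bestErr (A + N) k ≤ bestErr A k + √((m : ℝ) - k) * δ :=
    (bestErr_add_le hk.le A N).trans (by gcongr)
  have hsqrt : √(((m : ℝ) - k) * δ ^ 2) = √((m : ℝ) - k) * δ := by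
    rw [Real.sqrt_mul' _ (sq_nonneg δ), Real.sqrt_sq hδ]
  refine ⟨?_, fun _ hsmall => ?_⟩
  · rw [hsqrt]
    linarith [Real.sqrt_nonneg (2 * specNorm A * ((m : ℝ) - k) * δ)]
  · have : 0 ≤ √((m : ℝ) - k) * δ := by positivity
    linarith

/-- Perturbation bound for the best rank-`k` approximation error: with `‖N‖₂ ≤ δ` and
`B = A + N`, `‖B - B_k‖_F ≤ ‖A - A_k‖_F + √((m-k)δ²) + √(2 σ₁(A) (m-k) δ)`; and if moreover
`δ ≤ ε²‖A-A_k‖_F²/(2σ₁(A)(m-k))` and `√(m-k)·δ ≤ ε‖A-A_k‖_F`, then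
`‖B - B_k‖_F ≤ (1+2ε)‖A - A_k‖_F`. Here `σ₁(A) = specNorm A`. -/
theorem stmt_3 {m n k : ℕ} (hmn : m ≤ n) (hk : k < m)
    (A N : Matrix (Fin m) (Fin n) ℝ) (δ ε : ℝ) (hδ0 : 0 ≤ δ) (hε : 0 < ε)
    (hN : specNorm N ≤ δ) :
    bestErr (A + N) k ≤ bestErr A k + Real.sqrt (((m : ℝ) - k) * δ ^ 2)
        + Real.sqrt (2 * specNorm A * ((m : ℝ) - k) * δ) ∧
    ((δ ≤ ε ^ 2 * (bestErr A k) ^ 2 / (2 * specNorm A * ((m : ℝ) - k)) →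
      Real.sqrt ((m : ℝ) - k) * δ ≤ ε * bestErr A k →
      bestErr (A + N) k ≤ (1 + 2 * ε) * bestErr A k)) :=
  stmt_3_general hk A N δ ε hN
end

section
/- Let A ∈ R^{m×n}, S ∈ R^{n×ℓ}, and let V ∈ R^{n×k} have orthonormal columns with k < ℓ ≤ n. Suppose σ_k(VᵀS) ≥ γ > 0 (so VᵀS has full row rank k). Write E = A − A V Vᵀ. Then ‖A − A S (VᵀS)⁺ Vᵀ‖_F^2 = ‖E S (VᵀS)⁺‖_F^2 + ‖E‖_F^2 ≤ (1 + γ^{-2})·‖E‖_F^2 · max(1, ‖ES‖_F^2/‖E‖_F^2) whenever additionally ‖E S‖_F^2 ≤ ‖E‖_F^2, in which case ‖A − A S (VᵀS)⁺ Vᵀ‖_F^2 ≤ (1 + γ^{-2})‖E‖_F^2. -/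
open Matrix

/-- `Y` is the Moore–Penrose pseudoinverse of `X`. -/
def IsMoorePenrose {a b : ℕ} (X : Matrix (Fin a) (Fin b) ℝ) (Y : Matrix (Fin b) (Fin a) ℝ) : Prop :=
  X * Y * X = X ∧ Y * X * Y = Y ∧ (X * Y)ᵀ = X * Y ∧ (Y * X)ᵀ = Y * X

/-- Squared Frobenius norm of a real matrix. -/
noncomputable def frobSq {α β : Type*} [Fintype α] [Fintype β] (M : Matrix α β ℝ) : ℝ :=
  ∑ i, ∑ j, (M i j) ^ 2

/-- `svals A i` is the `i`-th largest singular value of `A` (0-indexed); `0` out of range. -/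
noncomputable def svals {m n : ℕ} (A : Matrix (Fin m) (Fin n) ℝ) : ℕ → ℝ :=
  fun i =>
    if h : i < n then
      Real.sqrt ((show (Aᵀ * A).IsHermitian by simpa using A.isHermitian_conjTranspose_mul_self).eigenvalues
        (Tuple.sort (fun j => -(show (Aᵀ * A).IsHermitian by simpa using A.isHermitian_conjTranspose_mul_self).eigenvalues j) ⟨i, h⟩))
    else 0

/-!
Since `VᵀS` has full row rank, `VᵀS Y = 1`, so `A V Vᵀ S Y Vᵀ = A V Vᵀ` and
`A - A S Y Vᵀ = E - (E S Y) Vᵀ`. As `E V = 0` and `Vᵀ V = 1`, the two terms are orthogonal in the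
Frobenius inner product, giving the Pythagorean identity. For the bound, each row `v` of `E S`
satisfies `γ² ‖v Y‖² ≤ ‖v Y (VᵀS)‖² ≤ ‖v‖²`: the first inequality because every nonzero eigenvalue
of `(VᵀS)ᵀ VᵀS` is at least `γ²`, the second because `Y VᵀS` is an orthogonal projection.
-/

open Finset
open scoped MatrixOrder

theorem Matrix.IsHermitian.smul_dotProduct_mulVec_le {n : Type*} [Fintype n] [DecidableEq n]
    {B : Matrix n n ℝ} (hB : B.IsHermitian) {c : ℝ}
    (hc : ∀ i, c * hB.eigenvalues i ≤ hB.eigenvalues i ^ 2) (u : n → ℝ) :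
    c * (u ⬝ᵥ B *ᵥ u) ≤ (B *ᵥ u) ⬝ᵥ (B *ᵥ u) := by
  have hpsd : (B * B - c • B).PosSemidef := by
    -- `B² - c B = f(B)` for `f x = x² - c x`, which is nonnegative on the spectrum of `B`.
    have h : cfc (fun x : ℝ => x ^ 2 - c * x) B = B * B - c • B := by
      rw [cfc_sub .., cfc_pow .., cfc_const_mul .., cfc_id' .., sq]
    rw [← h, ← nonneg_iff_posSemidef]
    refine cfc_nonneg fun x hx => ?_
    obtain ⟨i, rfl⟩ := hB.spectrum_real_eq_range_eigenvalues ▸ hx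
    linarith [hc i]
  have h := hpsd.dotProduct_mulVec_nonneg u
  rw [star_trivial, sub_mulVec, dotProduct_sub, smul_mulVec, dotProduct_smul, smul_eq_mul,
    ← mulVec_mulVec, dotProduct_mulVec, ← mulVec_transpose,
    ← conjTranspose_eq_transpose_of_trivial, hB] at h
  linarith

theorem dotProduct_self_vecMul_le_of_mul_self_eq {n : Type*} [Fintype n] {P : Matrix n n ℝ}
    (hPP : P * P = P) (hPt : Pᵀ = P) (v : n → ℝ) :
    (v ᵥ* P) ⬝ᵥ (v ᵥ* P) ≤ v ⬝ᵥ v := by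
  have hp : (v ᵥ* P) ⬝ᵥ (v ᵥ* P) = v ⬝ᵥ (v ᵥ* P) := by
    rw [← dotProduct_mulVec, ← vecMul_transpose, hPt, vecMul_vecMul, hPP]
  have h := dotProduct_self_star_nonneg (v - v ᵥ* P)
  simp only [star_trivial, sub_dotProduct, dotProduct_sub, dotProduct_comm (v ᵥ* P) v] at h
  linarith

theorem mulVec_surjective_of_rank_eq {m n : Type*} [Fintype m] [Fintype n] {R : Type*} [Field R]
    {X : Matrix m n R} (hX : X.rank = Fintype.card m) : Function.Surjective X.mulVec := by
  rw [← coe_mulVecLin, ← LinearMap.range_eq_top]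
  exact Submodule.eq_top_of_finrank_eq (by simpa [rank] using hX)

theorem mul_eq_one_of_mul_mul_eq_self {m n : Type*} [Fintype m] [Fintype n] [DecidableEq m]
    {R : Type*} [CommRing R] {X : Matrix m n R} {Y : Matrix n m R} (hXYX : X * Y * X = X)
    (hX : Function.Surjective X.mulVec) : X * Y = 1 := by
  refine toLin'.injective (LinearMap.ext fun v => ?_)
  obtain ⟨u, rfl⟩ := hX v
  simp [mulVec_mulVec, hXYX]

theorem dotProduct_self_vecMul_le_of_forall_sq_mul_le {m n : Type*} [Fintype m] [Fintype n]
    {X : Matrix m n ℝ} {Y : Matrix n m ℝ} (hYXY : Y * X * Y = Y) (hYX : (Y * X)ᵀ = Y * X)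
    {γ : ℝ} (hγ : 0 < γ) (hX : ∀ w, γ ^ 2 * (w ⬝ᵥ w) ≤ (w ᵥ* X) ⬝ᵥ (w ᵥ* X)) (v : n → ℝ) :
    (v ᵥ* Y) ⬝ᵥ (v ᵥ* Y) ≤ γ⁻¹ ^ 2 * (v ⬝ᵥ v) := by
  rw [inv_pow, le_inv_mul_iff₀ (pow_pos hγ 2)]
  calc γ ^ 2 * ((v ᵥ* Y) ⬝ᵥ (v ᵥ* Y)) ≤ (v ᵥ* (Y * X)) ⬝ᵥ (v ᵥ* (Y * X)) := by
        simpa only [vecMul_vecMul] using hX (v ᵥ* Y)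
    _ ≤ v ⬝ᵥ v :=
        dotProduct_self_vecMul_le_of_mul_self_eq (by rw [← Matrix.mul_assoc, hYXY]) hYX v

theorem frobSq_eq_sum_dotProduct {α β : Type*} [Fintype α] [Fintype β] (M : Matrix α β ℝ) :
    frobSq M = ∑ i, M i ⬝ᵥ M i := by
  simp [frobSq, dotProduct, sq]

theorem frobSq_eq_trace {α β : Type*} [Fintype α] [Fintype β] (M : Matrix α β ℝ) :
    frobSq M = (M * Mᵀ).trace := by
  simp [frobSq, trace, mul_apply, sq]

theorem frobSq_mul_le {α β γ : Type*} [Fintype α] [Fintype β] [Fintype γ] {Y : Matrix β γ ℝ}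
    {c : ℝ} (hY : ∀ v, (v ᵥ* Y) ⬝ᵥ (v ᵥ* Y) ≤ c * (v ⬝ᵥ v)) (M : Matrix α β ℝ) :
    frobSq (M * Y) ≤ c * frobSq M := by
  rw [frobSq_eq_sum_dotProduct, frobSq_eq_sum_dotProduct, mul_sum]
  exact sum_le_sum fun i _ => hY (M i)

theorem frobSq_sub_mul_transpose {α β γ : Type*} [Fintype α] [Fintype β] [Fintype γ]
    [DecidableEq γ] {E : Matrix α β ℝ} {V : Matrix β γ ℝ} (hEV : E * V = 0) (hV : Vᵀ * V = 1)
    (C : Matrix α γ ℝ) : frobSq (E - C * Vᵀ) = frobSq C + frobSq E := by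
  have hcross : E * (C * Vᵀ)ᵀ = 0 := by
    rw [transpose_mul, transpose_transpose, ← Matrix.mul_assoc, hEV, Matrix.zero_mul]
  have hcross' : C * Vᵀ * Eᵀ = 0 := by
    rw [← transpose_transpose (C * Vᵀ), ← transpose_mul, hcross, transpose_zero]
  have hsq : C * Vᵀ * (C * Vᵀ)ᵀ = C * Cᵀ := by
    rw [transpose_mul, transpose_transpose, Matrix.mul_assoc, ← Matrix.mul_assoc Vᵀ, hV,
      Matrix.one_mul]
  rw [frobSq_eq_trace, frobSq_eq_trace, frobSq_eq_trace, transpose_sub,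
    Matrix.sub_mul, Matrix.mul_sub, Matrix.mul_sub,
    hcross, hcross', hsq, sub_zero, zero_sub, sub_neg_eq_add, trace_add, add_comm]

theorem add_one_le_card_filter_le_of_le_sort {l : ℕ} (f : Fin l → ℝ) {c : ℝ} (i : Fin l)
    (h : c ≤ f (Tuple.sort (fun j => -f j) i)) : (i : ℕ) + 1 ≤ #{j | c ≤ f j} := by
  rw [← Fin.card_Iic]
  refine card_le_card_of_injOn (Tuple.sort fun j => -f j) (fun j hj => ?_)
    (Equiv.injective _).injOn
  have hmono := Tuple.monotone_sort (fun j => -f j) (mem_Iic.mp hj)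
  simp only [Function.comp_apply, neg_le_neg_iff] at hmono
  simpa using h.trans hmono

theorem isHermitian_transpose_mul_self {m n : Type*} [Fintype m] (X : Matrix m n ℝ) :
    (Xᵀ * X).IsHermitian := by
  simpa using X.isHermitian_conjTranspose_mul_self

theorem add_one_le_card_sq_le_eigenvalues {m n : ℕ} {X : Matrix (Fin m) (Fin n) ℝ} {γ : ℝ}
    (hγ : 0 < γ) {i : ℕ} (h : γ ≤ svals X i) :
    i + 1 ≤ #{j | γ ^ 2 ≤ (isHermitian_transpose_mul_self X).eigenvalues j} := by
  unfold svals at h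
  split_ifs at h with hi
  · exact add_one_le_card_filter_le_of_le_sort _ ⟨i, hi⟩ ((Real.le_sqrt' hγ).mp h)
  · linarith

theorem rank_eq_and_sq_le_eigenvalues_of_le_svals {k l : ℕ} {X : Matrix (Fin k) (Fin l) ℝ}
    {γ : ℝ} (hγ : 0 < γ) (hσ : γ ≤ svals X (k - 1)) :
    X.rank = k ∧ ∀ j, (isHermitian_transpose_mul_self X).eigenvalues j ≠ 0 →
      γ ^ 2 ≤ (isHermitian_transpose_mul_self X).eigenvalues j := by
  -- At least `k ≥ rank X` eigenvalues are `≥ γ²`, so these are all the nonzero ones.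
  set hB := isHermitian_transpose_mul_self X
  have hTN : ({j | γ ^ 2 ≤ hB.eigenvalues j} : Finset (Fin l)) ⊆
      ({j | hB.eigenvalues j ≠ 0} : Finset (Fin l)) :=
    monotone_filter_right _ fun j _ hj => ((pow_pos hγ 2).trans_le hj).ne'
  have hN : #{j | hB.eigenvalues j ≠ 0} = X.rank := by
    rw [← rank_conjTranspose_mul_self, conjTranspose_eq_transpose_of_trivial,
      hB.rank_eq_card_non_zero_eigs, Fintype.card_subtype]
  have hT := add_one_le_card_sq_le_eigenvalues hγ hσ
  have hrank := X.rank_le_height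
  have hTeq := eq_of_subset_of_card_le hTN (by omega)
  refine ⟨by have := card_le_card hTN; omega, fun j hj => ?_⟩
  have hjN : j ∈ ({j | hB.eigenvalues j ≠ 0} : Finset (Fin l)) := by simpa using hj
  rw [← hTeq] at hjN
  simpa using hjN

theorem mulVec_surjective_of_le_svals {k l : ℕ} {X : Matrix (Fin k) (Fin l) ℝ} {γ : ℝ}
    (hγ : 0 < γ) (hσ : γ ≤ svals X (k - 1)) : Function.Surjective X.mulVec :=
  mulVec_surjective_of_rank_eq <| by
    simpa using (rank_eq_and_sq_le_eigenvalues_of_le_svals hγ hσ).1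

theorem sq_mul_dotProduct_le_vecMul_of_le_svals {k l : ℕ} {X : Matrix (Fin k) (Fin l) ℝ}
    {γ : ℝ} (hγ : 0 < γ) (hσ : γ ≤ svals X (k - 1)) (w : Fin k → ℝ) :
    γ ^ 2 * (w ⬝ᵥ w) ≤ (w ᵥ* X) ⬝ᵥ (w ᵥ* X) := by
  obtain ⟨u, rfl⟩ := mulVec_surjective_of_le_svals hγ hσ w
  have heig := (rank_eq_and_sq_le_eigenvalues_of_le_svals hγ hσ).2
  have hB := isHermitian_transpose_mul_self X
  have hc : ∀ j, γ ^ 2 * hB.eigenvalues j ≤ hB.eigenvalues j ^ 2 := fun j => by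
    rcases eq_or_ne (hB.eigenvalues j) 0 with h0 | h0
    · simp [h0]
    · nlinarith [heig j h0]
  have := hB.smul_dotProduct_mulVec_le hc u
  rwa [← mulVec_mulVec, dotProduct_mulVec, mulVec_transpose, vecMul_transpose] at this

theorem stmt_11_general {m n l k : ℕ}
    (A : Matrix (Fin m) (Fin n) ℝ) (S : Matrix (Fin n) (Fin l) ℝ)
    (V : Matrix (Fin n) (Fin k) ℝ) (hV : Vᵀ * V = 1)
    (γ : ℝ) (hγ : 0 < γ) (hσ : γ ≤ svals (Vᵀ * S) (k - 1))
    (Y : Matrix (Fin l) (Fin k) ℝ) (hY : IsMoorePenrose (Vᵀ * S) Y) :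
    frobSq (A - A * S * Y * Vᵀ) =
        frobSq ((A - A * V * Vᵀ) * S * Y) + frobSq (A - A * V * Vᵀ) ∧
    (frobSq ((A - A * V * Vᵀ) * S) ≤ frobSq (A - A * V * Vᵀ) →
      frobSq (A - A * S * Y * Vᵀ) ≤ (1 + γ⁻¹ ^ 2) * frobSq (A - A * V * Vᵀ)) := by
  obtain ⟨hXYX, hYXY, -, hYX⟩ := hY
  have hXY : Vᵀ * S * Y = 1 :=
    mul_eq_one_of_mul_mul_eq_self hXYX (mulVec_surjective_of_le_svals hγ hσ)
  set E := A - A * V * Vᵀ with hE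
  have hEV : E * V = 0 := by
    rw [hE, Matrix.sub_mul, Matrix.mul_assoc _ Vᵀ, hV, Matrix.mul_one, sub_self]
  have hsplit : A - A * S * Y * Vᵀ = E - E * S * Y * Vᵀ := by
    have hAV : A * V * Vᵀ * S * Y = A * V := by
      rw [Matrix.mul_assoc _ Vᵀ, Matrix.mul_assoc _ (Vᵀ * S), hXY, Matrix.mul_one]
    rw [hE, Matrix.sub_mul, Matrix.sub_mul, Matrix.sub_mul, hAV]
    abel
  have hpyth : frobSq (A - A * S * Y * Vᵀ) = frobSq (E * S * Y) + frobSq E := by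
    rw [hsplit, frobSq_sub_mul_transpose hEV hV]
  refine ⟨hpyth, fun hES => ?_⟩
  have hC : frobSq (E * S * Y) ≤ γ⁻¹ ^ 2 * frobSq (E * S) :=
    frobSq_mul_le (dotProduct_self_vecMul_le_of_forall_sq_mul_le hYXY hYX hγ
      (sq_mul_dotProduct_le_vecMul_of_le_svals hγ hσ)) _
  have hES' := mul_le_mul_of_nonneg_left hES (by positivity : 0 ≤ γ⁻¹ ^ 2)
  rw [hpyth]
  linarith

/-- With `E = A - A V Vᵀ`, `σ_k(VᵀS) ≥ γ > 0` and `Y = (VᵀS)⁺`: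
`‖A - A S (VᵀS)⁺ Vᵀ‖_F² = ‖E S (VᵀS)⁺‖_F² + ‖E‖_F²`, and if additionally
`‖E S‖_F² ≤ ‖E‖_F²`, then `‖A - A S (VᵀS)⁺ Vᵀ‖_F² ≤ (1 + γ⁻²)‖E‖_F²`. -/
theorem stmt_11 {m n l k : ℕ} (hkl : k < l) (hln : l ≤ n)
    (A : Matrix (Fin m) (Fin n) ℝ) (S : Matrix (Fin n) (Fin l) ℝ)
    (V : Matrix (Fin n) (Fin k) ℝ) (hV : Vᵀ * V = 1)
    (γ : ℝ) (hγ : 0 < γ) (hσ : γ ≤ svals (Vᵀ * S) (k - 1))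
    (Y : Matrix (Fin l) (Fin k) ℝ) (hY : IsMoorePenrose (Vᵀ * S) Y) :
    frobSq (A - A * S * Y * Vᵀ) =
        frobSq ((A - A * V * Vᵀ) * S * Y) + frobSq (A - A * V * Vᵀ) ∧
    (frobSq ((A - A * V * Vᵀ) * S) ≤ frobSq (A - A * V * Vᵀ) →
      frobSq (A - A * S * Y * Vᵀ) ≤ (1 + γ⁻¹ ^ 2) * frobSq (A - A * V * Vᵀ)) :=
  stmt_11_general A S V hV γ hγ hσ Y hY
end
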